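/- arXiv:1911.00273 — 3 statements merged into one kernel-verified Lean document; each statement's English description precedes it below -/
import Mathlib

section
/- Let A = [[αI_{n−k}, C],[D, βI_k]] with k ≤ n/2, and set M(θ) = C*C + DD* − 2Re(e^{−2iθ}DC), where Re X = (X + X*)/2. Then the characteristic polynomial of Im(e^{−iθ}A) equals (Im(e^{−iθ}α) − λ)^{n−2k} · det( (λ² − λ·Im(e^{−iθ}(α+β)) + Im(e^{−iθ}α)Im(e^{−iθ}β))I_k − M(θ)/4 ). -/
/-!
Write `z = e^{-iθ}`. Taking imaginary parts blockwise, `Im(zA) - λ` is again a block matrix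
`[[c I, P], [Q, d I]]` with scalar diagonal blocks `c = Im(zα) - λ`, `d = Im(zβ) - λ`, and
since `|z| = 1` its off-diagonal blocks satisfy `QP = M(θ)/4`. Row reduction gives
`det [[c I_m, P], [Q, d I_k]] = c^(m-k) det(cd I_k - QP)` for `k ≤ m`, and
`cd = λ² - λ Im(z(α+β)) + Im(zα) Im(zβ)`.
-/

open Matrix

/-- The "imaginary part" of a square complex matrix: `Im X = (X - X*)/(2i)`. -/
noncomputable def imPart {ι : Type*} [Fintype ι] [DecidableEq ι] (X : Matrix ι ι ℂ) : Matrix ι ι ℂ :=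
  (2 * Complex.I)⁻¹ • (X - Xᴴ)

/-- The "real part" of a square complex matrix: `Re X = (X + X*)/2`. -/
noncomputable def rePart {ι : Type*} [Fintype ι] [DecidableEq ι] (X : Matrix ι ι ℂ) : Matrix ι ι ℂ :=
  (2 : ℂ)⁻¹ • (X + Xᴴ)

namespace Matrix

variable {m n R : Type*} [DecidableEq m] [DecidableEq n] [CommRing R]

theorem fromBlocks_sub_smul_one (A : Matrix m m R) (B : Matrix m n R) (E : Matrix n m R)
    (F : Matrix n n R) (t : R) :
    fromBlocks A B E F - t • 1 = fromBlocks (A - t • 1) B E (F - t • 1) := by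
  rw [← fromBlocks_one, fromBlocks_smul, sub_eq_add_neg, fromBlocks_neg, fromBlocks_add]
  simp only [smul_zero, neg_zero, add_zero, ← sub_eq_add_neg]

variable [Fintype m] [Fintype n]

theorem pow_card_mul_det_fromBlocks_smul_one (c d : R) (P : Matrix m n R) (Q : Matrix n m R) :
    c ^ Fintype.card n * (fromBlocks (c • 1) P Q (d • 1)).det =
      c ^ Fintype.card m * ((c * d) • 1 - Q * P).det := by
  have hmul : fromBlocks 1 0 (-Q) (c • 1) * fromBlocks (c • 1) P Q (d • 1) =
      fromBlocks (c • 1) P 0 ((c * d) • 1 - Q * P) := by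
    simp [fromBlocks_multiply, smul_smul, sub_eq_neg_add, mul_comm]
  have := congrArg det hmul
  rwa [det_mul, det_fromBlocks_zero₁₂, det_fromBlocks_zero₂₁, det_smul, det_smul,
    det_one, det_one, one_mul, mul_one, mul_one] at this

open Polynomial in
/-- Cancel `c ^ card n` at the generic point `c = X` of `R[X]`, where it is regular, then
specialise `X` to `c`. -/
theorem det_fromBlocks_smul_one (hnm : Fintype.card n ≤ Fintype.card m) (c d : R)
    (P : Matrix m n R) (Q : Matrix n m R) :
    (fromBlocks (c • 1) P Q (d • 1)).det =
      c ^ (Fintype.card m - Fintype.card n) * ((c * d) • 1 - Q * P).det := by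
  have generic := pow_card_mul_det_fromBlocks_smul_one (X : R[X]) (C d) (P.map C) (Q.map C)
  rw [← Nat.add_sub_cancel' hnm, pow_add, mul_assoc,
    (isRegular_X_pow _).left.eq_iff] at generic
  have := congrArg (evalRingHom c) generic
  rw [RingHom.map_det, RingHom.map_mul, RingHom.map_pow, RingHom.map_det] at this
  convert this using 3
  · simp [fromBlocks_map, Matrix.map_map, Function.comp_def, smul_one_eq_diagonal]
  · simp
  · rw [map_sub, RingHom.mapMatrix_apply, RingHom.mapMatrix_apply, Matrix.map_mul, Matrix.map_map,
      Matrix.map_map]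
    simp only [Function.comp_def, coe_evalRingHom, eval_C, Matrix.map_id', smul_one_eq_diagonal,
      diagonal_map eval_zero, eval_mul, eval_X]

end Matrix

open Complex

section ImPart

variable {m n : Type*}

noncomputable def offDiagImPart (B : Matrix m n ℂ) (E : Matrix n m ℂ) : Matrix m n ℂ :=
  (2 * I)⁻¹ • (B - Eᴴ)

variable [Fintype m] [Fintype n] [DecidableEq m] [DecidableEq n]

theorem imPart_fromBlocks (A : Matrix m m ℂ) (B : Matrix m n ℂ) (E : Matrix n m ℂ)
    (F : Matrix n n ℂ) :
    imPart (fromBlocks A B E F) =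
      fromBlocks (imPart A) (offDiagImPart B E) (offDiagImPart E B) (imPart F) := by
  simp only [imPart, offDiagImPart, fromBlocks_conjTranspose, sub_eq_add_neg, fromBlocks_neg,
    fromBlocks_add, fromBlocks_smul]

omit [Fintype n] [DecidableEq n] in
theorem imPart_smul_one (w : ℂ) : imPart (w • (1 : Matrix m m ℂ)) = (w.im : ℂ) • 1 := by
  rw [imPart, conjTranspose_smul, conjTranspose_one, ← sub_smul, smul_smul, im_eq_sub_conj,
    div_eq_inv_mul, Complex.star_def]

omit [DecidableEq m] in
theorem offDiagImPart_mul_offDiagImPart (B : Matrix m n ℂ) (E : Matrix n m ℂ) :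
    offDiagImPart E B * offDiagImPart B E =
      (4 : ℂ)⁻¹ • (Bᴴ * B + E * Eᴴ - (2 : ℂ) • rePart (E * B)) := by
  have h4 : (2 * I)⁻¹ * (2 * I)⁻¹ = -(4 : ℂ)⁻¹ := by
    rw [← mul_inv, mul_mul_mul_comm, I_mul_I]; norm_num
  rw [offDiagImPart, offDiagImPart, smul_mul, Matrix.mul_smul, smul_smul, h4, rePart, smul_smul,
    conjTranspose_mul, Matrix.sub_mul, Matrix.mul_sub, Matrix.mul_sub,
    mul_inv_cancel₀ two_ne_zero, one_smul]
  module

omit [DecidableEq m] in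
theorem offDiagImPart_smul_mul_offDiagImPart_smul {z : ℂ} (hz : star z * z = 1)
    (B : Matrix m n ℂ) (E : Matrix n m ℂ) :
    offDiagImPart (z • E) (z • B) * offDiagImPart (z • B) (z • E) =
      (4 : ℂ)⁻¹ • (Bᴴ * B + E * Eᴴ - (2 : ℂ) • rePart ((z * z) • (E * B))) := by
  rw [offDiagImPart_mul_offDiagImPart]
  simp only [conjTranspose_smul, smul_mul, Matrix.mul_smul, smul_smul, hz, mul_comm z (star z),
    one_smul]

end ImPart

theorem charpoly_of_scalar_diagonal_blocks
    {m k : ℕ} (hk : k ≤ m) (α β : ℂ)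
    (C : Matrix (Fin m) (Fin k) ℂ) (D : Matrix (Fin k) (Fin m) ℂ)
    (A : Matrix (Fin m ⊕ Fin k) (Fin m ⊕ Fin k) ℂ)
    (hA : A = Matrix.fromBlocks (α • 1) C D (β • 1))
    (M : ℝ → Matrix (Fin k) (Fin k) ℂ)
    (hM : ∀ θ : ℝ, M θ = Cᴴ * C + D * Dᴴ
      - (2 : ℂ) • rePart (Complex.exp (-(2 * θ : ℂ) * Complex.I) • (D * C)))
    (θ : ℝ) (lam : ℂ) :
    Matrix.det (imPart (Complex.exp (-(θ : ℂ) * Complex.I) • A) - lam • 1) =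
      (((Complex.exp (-(θ : ℂ) * Complex.I) * α).im : ℂ) - lam) ^ (m - k) *
        Matrix.det
          ((lam ^ 2 - lam * ((Complex.exp (-(θ : ℂ) * Complex.I) * (α + β)).im : ℂ)
              + ((Complex.exp (-(θ : ℂ) * Complex.I) * α).im : ℂ)
                * ((Complex.exp (-(θ : ℂ) * Complex.I) * β).im : ℂ))
            • (1 : Matrix (Fin k) (Fin k) ℂ) - (4 : ℂ)⁻¹ • M θ) := by
  set z := Complex.exp (-(θ : ℂ) * Complex.I)
  have hz : star z * z = 1 := by
    rw [star_def, ← Complex.exp_conj, ← Complex.exp_add]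
    simp
  have hzz : z * z = Complex.exp (-(2 * θ : ℂ) * Complex.I) := by
    rw [← Complex.exp_add]
    congr 1
    ring
  rw [hA, fromBlocks_smul, smul_smul, smul_smul, imPart_fromBlocks, imPart_smul_one,
    imPart_smul_one, fromBlocks_sub_smul_one, ← sub_smul, ← sub_smul,
    det_fromBlocks_smul_one (by simpa using hk), Fintype.card_fin, Fintype.card_fin,
    offDiagImPart_smul_mul_offDiagImPart_smul hz, hzz, ← hM, mul_add, add_im, ofReal_add]
  congr 4
  ring
end

section
/- Suppose Z, Z*, and H (with H Hermitian) can be put in upper triangular form by a single simultaneous similarity (i.e., there exists invertible S with S⁻¹ZS, S⁻¹Z*S, and S⁻¹HS all upper triangular). Then Z is normal and commutes with H. -/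
open Matrix

open ComplexOrder in
private lemma eq_zero_of_trace_mul_conjTranspose {k : ℕ}
    (M : Matrix (Fin k) (Fin k) ℂ) (h : Matrix.trace (M * Mᴴ) = 0) : M = 0 := by
  have htr : Matrix.trace (M * Mᴴ) = ∑ i, dotProduct (M i) (star (M i)) := by
    simp [Matrix.trace, Matrix.diag, Matrix.mul_apply, dotProduct,
      Matrix.conjTranspose_apply]
  rw [htr] at h
  have hz : ∀ i ∈ Finset.univ, dotProduct (M i) (star (M i)) = 0 := by
    rw [← Finset.sum_eq_zero_iff_of_nonneg (fun i _ => dotProduct_self_star_nonneg (M i))]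
    exact h
  ext i j
  have := dotProduct_self_star_eq_zero.mp (hz i (Finset.mem_univ i))
  exact congrFun this j

private lemma diag_mul_tri {k : ℕ} {A B : Matrix (Fin k) (Fin k) ℂ}
    (hA : Matrix.BlockTriangular A (id : Fin k → Fin k))
    (hB : Matrix.BlockTriangular B (id : Fin k → Fin k)) (i : Fin k) :
    (A * B) i i = A i i * B i i := by
  rw [Matrix.mul_apply]
  refine Finset.sum_eq_single i (fun j _ hj => ?_) (by simp)
  rcases lt_or_gt_of_ne hj with hlt | hgt
  · rw [hA (show (id j : Fin k) < id i from hlt), zero_mul]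
  · rw [hB (show (id i : Fin k) < id j from hgt), mul_zero]

private lemma trace_mul_eq_zero {k : ℕ} {P Q : Matrix (Fin k) (Fin k) ℂ}
    (hP : Matrix.BlockTriangular P (id : Fin k → Fin k))
    (hQ : Matrix.BlockTriangular Q (id : Fin k → Fin k))
    (hPd : ∀ i, P i i = 0) : Matrix.trace (P * Q) = 0 := by
  rw [Matrix.trace]
  refine Finset.sum_eq_zero fun i _ => ?_
  rw [Matrix.diag, Matrix.mul_apply]
  refine Finset.sum_eq_zero fun j _ => ?_
  rcases lt_trichotomy i j with hlt | heq | hgt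
  · rw [hQ (show (id i : Fin k) < id j from hlt), mul_zero]
  · subst heq; rw [hPd i, zero_mul]
  · rw [hP (show (id j : Fin k) < id i from hgt), zero_mul]

theorem normal_and_commuting_of_simultaneous_triangularization
    {k : ℕ} (H Z : Matrix (Fin k) (Fin k) ℂ) (hH : Hᴴ = H)
    (htri : ∃ S : Matrix (Fin k) (Fin k) ℂ, IsUnit S ∧
      Matrix.BlockTriangular (S⁻¹ * Z * S) (id : Fin k → Fin k) ∧
      Matrix.BlockTriangular (S⁻¹ * Zᴴ * S) (id : Fin k → Fin k) ∧
      Matrix.BlockTriangular (S⁻¹ * H * S) (id : Fin k → Fin k)) :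
    Z * Zᴴ = Zᴴ * Z ∧ Z * H = H * Z := by
  obtain ⟨S, hS, hA, hB, hC⟩ := htri
  set A := S⁻¹ * Z * S with hAdef
  set B := S⁻¹ * Zᴴ * S with hBdef
  set C := S⁻¹ * H * S with hCdef
  have hdet : IsUnit S.det := (Matrix.isUnit_iff_isUnit_det S).mp hS
  have hSinv : S * S⁻¹ = 1 := Matrix.mul_nonsing_inv S hdet
  have hinvS : S⁻¹ * S = 1 := Matrix.nonsing_inv_mul S hdet
  -- conjugation is multiplicative
  have hmul : ∀ X Y : Matrix (Fin k) (Fin k) ℂ,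
      (S⁻¹ * X * S) * (S⁻¹ * Y * S) = S⁻¹ * (X * Y) * S := by
    intro X Y
    calc (S⁻¹ * X * S) * (S⁻¹ * Y * S) = S⁻¹ * X * (S * S⁻¹) * Y * S := by
          simp only [Matrix.mul_assoc]
      _ = S⁻¹ * (X * Y) * S := by rw [hSinv]; simp only [Matrix.mul_assoc, Matrix.mul_one]
  have htrconj : ∀ X : Matrix (Fin k) (Fin k) ℂ,
      Matrix.trace (S⁻¹ * X * S) = Matrix.trace X := by
    intro X
    rw [Matrix.trace_mul_comm, ← Matrix.mul_assoc, hSinv, Matrix.one_mul]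
  -- commutator diagonals vanish
  have hcommdiag : ∀ {X Y : Matrix (Fin k) (Fin k) ℂ},
      Matrix.BlockTriangular X (id : Fin k → Fin k) →
      Matrix.BlockTriangular Y (id : Fin k → Fin k) →
      ∀ i, (X * Y - Y * X) i i = 0 := by
    intro X Y hX hY i
    simp [Matrix.sub_apply, diag_mul_tri hX hY i, diag_mul_tri hY hX i, mul_comm]
  constructor
  · -- normality
    set M := Z * Zᴴ - Zᴴ * Z with hM
    have hMH : Mᴴ = M := by
      simp [hM, Matrix.conjTranspose_sub, Matrix.conjTranspose_mul]
    have hconjM : S⁻¹ * M * S = A * B - B * A := by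
      simp only [hM, Matrix.mul_sub, Matrix.sub_mul, hAdef, hBdef, hmul]
    have htr : Matrix.trace (M * Mᴴ) = 0 := by
      rw [hMH, ← htrconj (M * M), ← hmul M M, hconjM]
      exact trace_mul_eq_zero ((hA.mul hB).sub (hB.mul hA)) ((hA.mul hB).sub (hB.mul hA))
        (hcommdiag hA hB)
    have := eq_zero_of_trace_mul_conjTranspose M htr
    rw [hM, sub_eq_zero] at this
    exact this
  · -- commuting with H
    set M := Z * H - H * Z with hM
    have hMH : Mᴴ = H * Zᴴ - Zᴴ * H := by
      simp [hM, Matrix.conjTranspose_sub, Matrix.conjTranspose_mul, hH]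
    have hconjM : S⁻¹ * M * S = A * C - C * A := by
      simp only [hM, Matrix.mul_sub, Matrix.sub_mul, hAdef, hCdef, hmul]
    have hconjMH : S⁻¹ * Mᴴ * S = C * B - B * C := by
      simp only [hMH, Matrix.mul_sub, Matrix.sub_mul, hBdef, hCdef, hmul]
    have htr : Matrix.trace (M * Mᴴ) = 0 := by
      rw [← htrconj (M * Mᴴ), ← hmul M Mᴴ, hconjM, hconjMH]
      exact trace_mul_eq_zero ((hA.mul hC).sub (hC.mul hA)) ((hC.mul hB).sub (hB.mul hC))
        (hcommdiag hA hC)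
    have := eq_zero_of_trace_mul_conjTranspose M htr
    rw [hM, sub_eq_zero] at this
    exact this
end

section
/- Let h₁, h₂ ∈ ℝ and let Z be a 2×2 matrix with eigenvalues z₁ ≠ z₂ and entries z_{ij} satisfying −(h₁−h₂)²·z₁₂z₂₁/(z₁−z₂)² = (|z₁₂| + |z₂₁|)², with h₁ ≠ h₂. Then the quantity z₁₂z₂₁/(z₁−z₂)² is real and nonpositive, and c := (h₁−h₂)(z₂₂−z₁₁)/(z₁−z₂) is real. -/
/-!
Condition (iv) says that `-(h₁ - h₂)² w` is a nonnegative real, where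
`w = z₁₂ z₂₁ / (z₁ - z₂)²`; as `h₁ ≠ h₂`, `w` is a nonpositive real. Dividing the discriminant
identity `(z₁ - z₂)² = (z₂₂ - z₁₁)² + 4 z₁₂ z₂₁` by `(z₁ - z₂)²` shows that
`u = (z₂₂ - z₁₁) / (z₁ - z₂)` satisfies `u² = 1 - 4w ≥ 1`, and a complex number whose square is
a nonnegative real is itself real.
-/

open Matrix

theorem Matrix.sub_sq_eq_of_add_eq_trace_of_mul_eq_det {R : Type*} [CommRing R]
    (Z : Matrix (Fin 2) (Fin 2) R) {z₁ z₂ : R}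
    (hsum : z₁ + z₂ = Z.trace) (hprod : z₁ * z₂ = Z.det) :
    (z₁ - z₂) ^ 2 = (Z 1 1 - Z 0 0) ^ 2 + 4 * (Z 0 1 * Z 1 0) := by
  rw [trace_fin_two] at hsum
  rw [det_fin_two] at hprod
  linear_combination (z₁ + z₂ + Z 0 0 + Z 1 1) * hsum - 4 * hprod

theorem Complex.exists_ofReal_eq_of_sq_eq_ofReal {u : ℂ} {r : ℝ} (hr : 0 ≤ r)
    (hu : u ^ 2 = r) : ∃ x : ℝ, u = x := by
  have him : u.im = 0 := Complex.sq_nonneg_iff.mp (hu ▸ Complex.zero_le_real.mpr hr)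
  exact ⟨u.re, Complex.ext rfl him⟩

theorem Complex.exists_nonpos_of_neg_sq_mul_eq_ofReal {a : ℝ} (ha : a ≠ 0) {w : ℂ} {R : ℝ}
    (hR : 0 ≤ R) (h : -(a : ℂ) ^ 2 * w = R) : ∃ t : ℝ, t ≤ 0 ∧ w = t := by
  refine ⟨-(R / a ^ 2), neg_nonpos.mpr (by positivity), ?_⟩
  have ha' : (a : ℂ) ≠ 0 := Complex.ofReal_ne_zero.mpr ha
  push_cast
  field_simp
  linear_combination -h

theorem nonpos_ratio_and_real_c_of_condition_iv
    (h₁ h₂ : ℝ) (hh : h₁ ≠ h₂)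
    (Z : Matrix (Fin 2) (Fin 2) ℂ) (z₁ z₂ : ℂ)
    (hsum : z₁ + z₂ = Matrix.trace Z) (hprod : z₁ * z₂ = Matrix.det Z)
    (hne : z₁ ≠ z₂)
    (hiv : -((h₁ - h₂ : ℝ) : ℂ) ^ 2 * (Z 0 1 * Z 1 0) / (z₁ - z₂) ^ 2 =
      (((‖Z 0 1‖ + ‖Z 1 0‖) ^ 2 : ℝ) : ℂ)) :
    (∃ t : ℝ, t ≤ 0 ∧ (Z 0 1 * Z 1 0) / (z₁ - z₂) ^ 2 = (t : ℂ)) ∧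
    (∃ c : ℝ, ((h₁ - h₂ : ℝ) : ℂ) * (Z 1 1 - Z 0 0) / (z₁ - z₂) = (c : ℂ)) := by
  have hD : z₁ - z₂ ≠ 0 := sub_ne_zero.mpr hne
  obtain ⟨t, ht, hw⟩ := Complex.exists_nonpos_of_neg_sq_mul_eq_ofReal (sub_ne_zero.mpr hh)
    (sq_nonneg _) (by rw [← hiv, mul_div_assoc])
  refine ⟨⟨t, ht, hw⟩, ?_⟩
  have hu : ((Z 1 1 - Z 0 0) / (z₁ - z₂)) ^ 2 = ((1 - 4 * t : ℝ) : ℂ) := by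
    have hdisc := Z.sub_sq_eq_of_add_eq_trace_of_mul_eq_det hsum hprod
    push_cast
    rw [← hw]
    field_simp
    linear_combination -hdisc
  obtain ⟨x, hx⟩ := Complex.exists_ofReal_eq_of_sq_eq_ofReal (by linarith) hu
  exact ⟨(h₁ - h₂) * x, by rw [mul_div_assoc, hx]; push_cast; ring⟩
end
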